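/- For b ∈ ℝ, γ > 0, and the piecewise-linear function κ̆(z̃) = (b−γ)z̃ for z̃ < 0 and κ̆(z̃) = b z̃ for z̃ ≥ 0, the variational identity κ̆(z̃) = inf_{σ² > 0} ( (z̃ + (b − γ/2)σ²)² / (2σ²) − b(b−γ)σ²/2 ) holds for every z̃ ∈ ℝ with z̃ ≠ 0, and is the infimum limit (value taken as σ² → 0) when z̃ = 0. -/

import Mathlib

/-! For `σ² > 0` the objective equals `(z̃²/σ² + γ²σ²/4)/2 + (b − γ/2) z̃`, and by AM–GM
`z̃²/σ² + γ²σ²/4 ≥ γ|z̃|`, with equality at `σ² = 2|z̃|/γ`. Since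
`κ̆(z̃) = γ|z̃|/2 + (b − γ/2) z̃`, the infimum is attained and equals `κ̆(z̃)`. At `z̃ = 0` the
objective is `γ²σ²/8`, which tends to `0 = κ̆(0)`. -/

open Filter Set Topology

noncomputable section

def proxyDualHinge (b γ z : ℝ) : ℝ := if z < 0 then (b - γ) * z else b * z

def nupObjective (b γ z s : ℝ) : ℝ := (z + (b - γ / 2) * s) ^ 2 / (2 * s) - b * (b - γ) * s / 2

lemma proxyDualHinge_eq (b γ z : ℝ) : proxyDualHinge b γ z = γ * |z| / 2 + (b - γ / 2) * z := by
  unfold proxyDualHinge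
  split_ifs with hz
  · rw [abs_of_neg hz]; ring
  · rw [abs_of_nonneg (not_lt.mp hz)]; ring

lemma nupObjective_eq (b γ z : ℝ) {s : ℝ} (hs : s ≠ 0) :
    nupObjective b γ z s = (z ^ 2 / s + γ ^ 2 * s / 4) / 2 + (b - γ / 2) * z := by
  unfold nupObjective
  field_simp
  ring

lemma mul_abs_le_sq_div_add (c z : ℝ) {s : ℝ} (hs : 0 < s) :
    c * |z| ≤ z ^ 2 / s + c ^ 2 * s / 4 := by
  have key : z ^ 2 / s + c ^ 2 * s / 4 - c * |z| = (|z| - c * s / 2) ^ 2 / s := by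
    rw [← sq_abs z]
    field_simp
    ring
  have : 0 ≤ (|z| - c * s / 2) ^ 2 / s := by positivity
  linarith

lemma sq_div_add_eq_mul_abs {c z : ℝ} (hc : 0 < c) (hz : z ≠ 0) :
    z ^ 2 / (2 * |z| / c) + c ^ 2 * (2 * |z| / c) / 4 = c * |z| := by
  have : 0 < |z| := abs_pos.mpr hz
  field_simp
  rw [sq_abs]
  ring

lemma isLeast_nupObjective {b γ z : ℝ} (hγ : 0 < γ) (hz : z ≠ 0) :
    IsLeast (range fun s : {s : ℝ // 0 < s} => nupObjective b γ z s) (proxyDualHinge b γ z) := by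
  have hs₀ : 0 < 2 * |z| / γ := by positivity
  rw [proxyDualHinge_eq]
  refine ⟨⟨⟨_, hs₀⟩, ?_⟩, ?_⟩
  · simp only [nupObjective_eq b γ z hs₀.ne', sq_div_add_eq_mul_abs hγ hz]
  · rintro _ ⟨⟨s, hs⟩, rfl⟩
    have := mul_abs_le_sq_div_add γ z hs
    simp only [nupObjective_eq b γ z hs.ne']
    linarith

lemma tendsto_nupObjective_zero (b γ : ℝ) :
    Tendsto (nupObjective b γ 0) (𝓝[>] 0) (𝓝 (proxyDualHinge b γ 0)) := by
  have hlin : Tendsto (fun s : ℝ => γ ^ 2 / 8 * s) (𝓝[>] 0) (𝓝 0) :=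
    tendsto_nhdsWithin_of_tendsto_nhds ((continuous_const_mul _).tendsto' 0 0 (mul_zero _))
  rw [show proxyDualHinge b γ 0 = 0 by simp [proxyDualHinge]]
  refine hlin.congr' ?_
  filter_upwards [self_mem_nhdsWithin] with s hs
  rw [nupObjective_eq b γ 0 (ne_of_gt hs)]
  ring

end

/-- Variational (NUP) representation of the proxy dual hinge loss
`κ̆(z̃) = (b−γ)z̃` for `z̃ < 0`, `b z̃` for `z̃ ≥ 0`:
for `z̃ ≠ 0`, `κ̆(z̃) = inf_{σ²>0} ((z̃+(b−γ/2)σ²)²/(2σ²) − b(b−γ)σ²/2)`;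
for `z̃ = 0` the value is the limit as `σ² → 0⁺`. -/
theorem proxy_dual_hinge_variational (b γ : ℝ) (hγ : 0 < γ) (zt : ℝ) :
    (zt ≠ 0 →
      (if zt < 0 then (b - γ) * zt else b * zt)
        = ⨅ s : {s : ℝ // 0 < s},
            ((zt + (b - γ / 2) * s.1) ^ 2 / (2 * s.1) - b * (b - γ) * s.1 / 2)) ∧
    (zt = 0 →
      Filter.Tendsto
        (fun s : ℝ => (zt + (b - γ / 2) * s) ^ 2 / (2 * s) - b * (b - γ) * s / 2)
        (nhdsWithin 0 (Set.Ioi 0))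
        (nhds (if zt < 0 then (b - γ) * zt else b * zt))) := by
  refine ⟨fun hz => ?_, fun hz => ?_⟩
  · have : Nonempty {s : ℝ // 0 < s} := ⟨⟨1, one_pos⟩⟩
    exact ((isLeast_nupObjective hγ hz).isGLB.ciInf_eq).symm
  · subst hz
    exact tendsto_nupObjective_zero b γ
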